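/- arXiv:1607.06881 — 7 statements merged into one kernel-verified Lean document; each statement's English description precedes it below -/
import Mathlib

section
/- Let θ ∈ [0, π/2) and let f : ℝ^d → ℂ be twice continuously differentiable with bounded second partial derivatives, such that f(x) lies in the sector Σ_θ = {r e^{iψ} : r ≥ 0, |ψ| ≤ θ} for all x. Then for every j, |∂_j f|² ≤ 4 (1 + tan θ)² (sup_{1≤l≤d} ‖∂_l² f‖_∞) · Re f pointwise. -/
/-!
On a coordinate line through `x`, a nonnegative function `g` with `g'' ≤ M` satisfies
`0 ≤ g (a + s) ≤ g a + g' a * s + M s² / 2` for every `s`, so the discriminant of this quadratic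
is nonpositive: `g' a ² ≤ 2 M g a`. Apply this to `Re f`, and to
`tan θ · Re f ± Im f = Re ((tan θ ∓ i) f)`, which are nonnegative on the sector and have second
derivatives bounded by `(1 + tan θ) K`. Half the difference of the last two bounds controls
`(Im ∂_j f)²`.
-/

open Complex

theorem image_add_le_taylor_of_deriv2_le {g g' g'' : ℝ → ℝ} {M : ℝ}
    (hg : ∀ t, HasDerivAt g (g' t) t) (hg' : ∀ t, HasDerivAt g' (g'' t) t)
    (hM : ∀ t, g'' t ≤ M) (a s : ℝ) :
    g (a + s) ≤ g a + g' a * s + M / 2 * s ^ 2 := by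
  -- The gap between the quadratic majorant and `g` is convex with a critical point at `a`.
  set F : ℝ → ℝ := fun t => g a + g' a * (t - a) + M / 2 * (t - a) ^ 2 - g t
  have hF : ∀ t, HasDerivAt F (g' a + M * (t - a) - g' t) t := fun t => by
    have hlin := ((hasDerivAt_id' t).sub_const a).const_mul (g' a) |>.const_add (g a)
    have hsq := (((hasDerivAt_id' t).sub_const a).pow 2).const_mul (M / 2)
    exact ((hlin.add hsq).sub (hg t)).congr_deriv (by ring)
  have hF' : ∀ t, HasDerivAt (fun t => g' a + M * (t - a) - g' t) (M - g'' t) t := fun t =>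
    ((((hasDerivAt_id' t).sub_const a).const_mul M).const_add (g' a) |>.sub (hg' t)).congr_deriv
      (by ring)
  have hconv : ConvexOn ℝ Set.univ F :=
    convexOn_of_hasDerivWithinAt2_nonneg convex_univ
      (fun t _ => (hF t).continuousAt.continuousWithinAt)
      (fun t _ => (hF t).hasDerivWithinAt) (fun t _ => (hF' t).hasDerivWithinAt)
      (fun t _ => sub_nonneg.2 (hM t))
  have hmin : IsMinOn F Set.univ a := by
    refine hconv.isMinOn_of_rightDeriv_eq_zero (by simp) ?_
    rw [(hF a).hasDerivWithinAt.derivWithin (uniqueDiffWithinAt_Ioi a)]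
    ring
  have h := hmin (Set.mem_univ (a + s))
  simp only [F, Set.mem_ofPred_eq, sub_self, mul_zero, add_zero, zero_pow two_ne_zero,
    add_sub_cancel_left] at h
  linarith

theorem sq_deriv_le_of_nonneg {g g' g'' : ℝ → ℝ} {M : ℝ}
    (hg : ∀ t, HasDerivAt g (g' t) t) (hg' : ∀ t, HasDerivAt g' (g'' t) t)
    (hpos : ∀ t, 0 ≤ g t) (hM : ∀ t, g'' t ≤ M) (a : ℝ) :
    g' a ^ 2 ≤ 2 * M * g a := by
  have hquad : ∀ s, 0 ≤ M / 2 * (s * s) + g' a * s + g a := fun s => by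
    linarith [hpos (a + s), image_add_le_taylor_of_deriv2_le hg hg' hM a s, sq s]
  have := discrim_le_zero hquad
  rw [discrim] at this
  linarith

theorem sq_re_mul_deriv_le {φ φ' φ'' : ℝ → ℂ} {K : ℝ} (c : ℂ)
    (hφ : ∀ t, HasDerivAt φ (φ' t) t) (hφ' : ∀ t, HasDerivAt φ' (φ'' t) t)
    (hpos : ∀ t, 0 ≤ (c * φ t).re) (hK : ∀ t, ‖φ'' t‖ ≤ K) (a : ℝ) :
    (c * φ' a).re ^ 2 ≤ 2 * (‖c‖ * K) * (c * φ a).re := by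
  refine sq_deriv_le_of_nonneg (g'' := fun t => (c * φ'' t).re)
    (fun t => reCLM.hasFDerivAt.comp_hasDerivAt t ((hφ t).const_mul c))
    (fun t => reCLM.hasFDerivAt.comp_hasDerivAt t ((hφ' t).const_mul c)) hpos (fun t => ?_) a
  calc (c * φ'' t).re ≤ ‖c * φ'' t‖ := re_le_norm _
    _ ≤ ‖c‖ * K := by rw [norm_mul]; gcongr; exact hK t

theorem sq_norm_deriv_le_of_mem_sector {φ φ' φ'' : ℝ → ℂ} {T K : ℝ} (hT : 0 ≤ T)
    (hφ : ∀ t, HasDerivAt φ (φ' t) t) (hφ' : ∀ t, HasDerivAt φ' (φ'' t) t)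
    (hsec : ∀ t, 0 ≤ (φ t).re ∧ |(φ t).im| ≤ T * (φ t).re) (hK : ∀ t, ‖φ'' t‖ ≤ K) (a : ℝ) :
    ‖φ' a‖ ^ 2 ≤ 4 * (1 + T) ^ 2 * K * (φ a).re := by
  have hK0 : 0 ≤ K := (norm_nonneg _).trans (hK a)
  have hR := (hsec a).1
  have hI := abs_le.1 (hsec a).2
  have hsub : ∀ z : ℂ, ((T - I) * z).re = T * z.re + z.im := fun z => by simp
  have hadd : ∀ z : ℂ, ((T + I) * z).re = T * z.re - z.im := fun z => by simp
  have hnorm_sub : ‖(T : ℂ) - I‖ ≤ 1 + T :=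
    (norm_sub_le _ _).trans (by simp [abs_of_nonneg hT, add_comm])
  have hnorm_add : ‖(T : ℂ) + I‖ ≤ 1 + T :=
    (norm_add_le _ _).trans (by simp [abs_of_nonneg hT, add_comm])
  have hre := sq_re_mul_deriv_le 1 hφ hφ' (by simpa using fun t => (hsec t).1) hK a
  have hsum := sq_re_mul_deriv_le (T - I) hφ hφ'
    (fun t => by rw [hsub]; linarith [(abs_le.1 (hsec t).2).1]) hK a
  have hdiff := sq_re_mul_deriv_le (T + I) hφ hφ'
    (fun t => by rw [hadd]; linarith [(abs_le.1 (hsec t).2).2]) hK a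
  simp only [one_mul, norm_one] at hre
  rw [hsub, hsub] at hsum
  rw [hadd, hadd] at hdiff
  have hsum' : _ ≤ 2 * ((1 + T) * K) * (T * (φ a).re + (φ a).im) :=
    hsum.trans (by gcongr; linarith [hI.1])
  have hdiff' : _ ≤ 2 * ((1 + T) * K) * (T * (φ a).re - (φ a).im) :=
    hdiff.trans (by gcongr; linarith [hI.2])
  have him : (φ' a).im ^ 2 ≤ 2 * ((1 + T) * K) * (T * (φ a).re) := by
    nlinarith [sq_nonneg (T * (φ' a).re)]
  rw [← normSq_eq_norm_sq, normSq_apply]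
  nlinarith [mul_nonneg hK0 hR, mul_nonneg (mul_nonneg hT hK0) hR,
    mul_nonneg (mul_nonneg (mul_nonneg hT hT) hK0) hR]

theorem hasDerivAt_comp_add_smul {E F : Type*} [NormedAddCommGroup E] [NormedSpace ℝ E]
    [NormedAddCommGroup F] [NormedSpace ℝ F] {f : E → F} {x v : E} {t : ℝ}
    (hf : DifferentiableAt ℝ f (x + t • v)) :
    HasDerivAt (fun s : ℝ => f (x + s • v)) (fderiv ℝ f (x + t • v) v) t :=
  hf.hasFDerivAt.comp_hasDerivAt t
    ((((hasDerivAt_id t).smul_const v).const_add x).congr_deriv (one_smul ℝ v))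

/-- Sectorial version: if `f : ℝ^d → ℂ` is C², takes values in the sector `Σ_θ`,
and `K` bounds all pure second partials `‖∂_l² f‖_∞`, then
`|∂_j f|² ≤ 4 (1 + tan θ)² K · Re f` pointwise. -/
theorem stmt_2 (d : ℕ) (θ : ℝ) (hθ : θ ∈ Set.Ico 0 (Real.pi / 2))
    (f : (Fin d → ℝ) → ℂ) (hf : ContDiff ℝ 2 f)
    (hsec : ∀ x, 0 ≤ (f x).re ∧ |(f x).im| ≤ Real.tan θ * (f x).re)
    (K : ℝ)
    (hK : ∀ l : Fin d, ∀ x,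
      ‖fderiv ℝ (fun y => fderiv ℝ f y (Pi.single l 1)) x (Pi.single l 1)‖ ≤ K)
    (j : Fin d) (x : Fin d → ℝ) :
    ‖fderiv ℝ f x (Pi.single j 1)‖ ^ 2 ≤ 4 * (1 + Real.tan θ) ^ 2 * K * (f x).re := by
  have hT : 0 ≤ Real.tan θ := Real.tan_nonneg_of_nonneg_of_le_pi_div_two hθ.1 hθ.2.le
  have hf₁ : Differentiable ℝ f := hf.differentiable (by norm_num)
  have hf₂ : Differentiable ℝ fun y => fderiv ℝ f y (Pi.single j 1) :=
    ((hf.fderiv_right le_rfl).clm_apply contDiff_const).differentiable one_ne_zero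
  simpa using sq_norm_deriv_le_of_mem_sector hT
    (fun _ => hasDerivAt_comp_add_smul (hf₁ _)) (fun _ => hasDerivAt_comp_add_smul (hf₂ _))
    (fun _ => hsec _) (fun _ => hK j _) 0
end

section
/- Let θ ∈ [0, π/2) and let C be a d×d complex matrix such that (C ξ, ξ) ∈ Σ_θ for all ξ ∈ ℂ^d. Write Re C = (C + C*)/2. Then |(C ξ, η)| ≤ 2 (1 + tan θ) ((Re C) ξ, ξ)^{1/2} ((Re C) η, η)^{1/2} for all ξ, η ∈ ℂ^d. -/
open Matrix

lemma stmt3_conj (d : ℕ) (C : Matrix (Fin d) (Fin d) ℂ) (x : Fin d → ℂ) :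
    C.conjTranspose.mulVec x ⬝ᵥ star x = star (C.mulVec x ⬝ᵥ star x) := by
  simp [Matrix.mulVec, dotProduct, Matrix.conjTranspose_apply, Finset.mul_sum, Finset.sum_mul]
  rw [Finset.sum_comm]
  congr 1; ext i; congr 1; ext j; ring

lemma stmt3_re (d : ℕ) (C : Matrix (Fin d) (Fin d) ℂ) (x : Fin d → ℂ) :
    (((2:ℂ)⁻¹ • (C + C.conjTranspose)).mulVec x ⬝ᵥ star x).re
      = (C.mulVec x ⬝ᵥ star x).re := by
  rw [Matrix.smul_mulVec, Matrix.add_mulVec, smul_dotProduct, add_dotProduct,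
    stmt3_conj, smul_eq_mul]
  have : (2:ℂ)⁻¹ = ((2⁻¹:ℝ):ℂ) := by norm_num
  rw [this, Complex.re_ofReal_mul]
  simp [Complex.add_re]
  ring

lemma stmt3_pol (d : ℕ) (C : Matrix (Fin d) (Fin d) ℂ) (x y : Fin d → ℂ) :
    4 * (C.mulVec x ⬝ᵥ star y) =
      (C.mulVec (x+y) ⬝ᵥ star (x+y)) - (C.mulVec (x-y) ⬝ᵥ star (x-y))
      + Complex.I * ((C.mulVec (x + Complex.I • y) ⬝ᵥ star (x + Complex.I • y))
        - (C.mulVec (x - Complex.I • y) ⬝ᵥ star (x - Complex.I • y))) := by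
  simp only [Matrix.mulVec_add, Matrix.mulVec_sub, Matrix.mulVec_smul, add_dotProduct,
    sub_dotProduct, smul_dotProduct, dotProduct_add, dotProduct_sub, dotProduct_smul,
    star_add, star_sub, star_smul, smul_eq_mul, Complex.star_def, Complex.conj_I]
  ring_nf
  simp only [Complex.I_sq]
  ring

lemma stmt3_sum (d : ℕ) (C : Matrix (Fin d) (Fin d) ℂ) (x y : Fin d → ℂ) :
    (C.mulVec (x+y) ⬝ᵥ star (x+y)) + (C.mulVec (x-y) ⬝ᵥ star (x-y))
      + (C.mulVec (x + Complex.I • y) ⬝ᵥ star (x + Complex.I • y))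
      + (C.mulVec (x - Complex.I • y) ⬝ᵥ star (x - Complex.I • y))
    = 4 * (C.mulVec x ⬝ᵥ star x) + 4 * (C.mulVec y ⬝ᵥ star y) := by
  simp only [Matrix.mulVec_add, Matrix.mulVec_sub, Matrix.mulVec_smul, add_dotProduct,
    sub_dotProduct, smul_dotProduct, dotProduct_add, dotProduct_sub, dotProduct_smul,
    star_add, star_sub, star_smul, smul_eq_mul, Complex.star_def, Complex.conj_I]
  ring_nf
  simp only [Complex.I_sq]
  ring

lemma stmt3_scale_eq (d : ℕ) (C : Matrix (Fin d) (Fin d) ℂ) (x y : Fin d → ℂ) (t : ℝ)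
    (ht : 0 < t) :
    C.mulVec ((t:ℂ) • x) ⬝ᵥ star (((t⁻¹:ℝ):ℂ) • y) = C.mulVec x ⬝ᵥ star y := by
  have h1 : ((t⁻¹:ℝ):ℂ) * (t:ℂ) = 1 := by norm_cast; exact inv_mul_cancel₀ ht.ne'
  simp only [Matrix.mulVec_smul, smul_dotProduct, dotProduct_smul, star_smul, smul_eq_mul,
    Complex.star_def, Complex.conj_ofReal]
  rw [← mul_assoc, h1, one_mul]

lemma stmt3_scale_re (d : ℕ) (C : Matrix (Fin d) (Fin d) ℂ) (x : Fin d → ℂ) (t : ℝ) :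
    (C.mulVec ((t:ℂ) • x) ⬝ᵥ star ((t:ℂ) • x)).re = t^2 * (C.mulVec x ⬝ᵥ star x).re := by
  simp only [Matrix.mulVec_smul, smul_dotProduct, dotProduct_smul, star_smul, smul_eq_mul,
    Complex.star_def, Complex.conj_ofReal, ← mul_assoc]
  rw [show ((t:ℂ)*(t:ℂ)) = ((t^2:ℝ):ℂ) by push_cast; ring, Complex.re_ofReal_mul]

/-- For a complex `d×d` matrix `C` taking values in the sector `Σ_θ`,
`|(Cξ,η)| ≤ 2(1+tan θ) ((Re C)ξ,ξ)^{1/2} ((Re C)η,η)^{1/2}`. -/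
theorem stmt_3 (d : ℕ) (θ : ℝ) (hθ : θ ∈ Set.Ico 0 (Real.pi / 2))
    (C : Matrix (Fin d) (Fin d) ℂ)
    (hsec : ∀ ξ : Fin d → ℂ,
      0 ≤ (C.mulVec ξ ⬝ᵥ star ξ).re ∧
      |(C.mulVec ξ ⬝ᵥ star ξ).im| ≤ Real.tan θ * (C.mulVec ξ ⬝ᵥ star ξ).re)
    (ξ η : Fin d → ℂ) :
    ‖C.mulVec ξ ⬝ᵥ star η‖ ≤ 2 * (1 + Real.tan θ) *
      Real.sqrt (((((2:ℂ)⁻¹ • (C + C.conjTranspose)).mulVec ξ) ⬝ᵥ star ξ).re) *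
      Real.sqrt (((((2:ℂ)⁻¹ • (C + C.conjTranspose)).mulVec η) ⬝ᵥ star η).re) := by
  obtain ⟨hθ0, hθ2⟩ := hθ
  have htan : 0 ≤ Real.tan θ := Real.tan_nonneg_of_nonneg_of_le_pi_div_two hθ0 hθ2.le
  set K : ℝ := 1 + Real.tan θ with hKdef
  have hK0 : 0 ≤ K := by positivity
  rw [stmt3_re, stmt3_re]
  set a : ℝ := (C.mulVec ξ ⬝ᵥ star ξ).re with ha_def
  set b : ℝ := (C.mulVec η ⬝ᵥ star η).re with hb_def
  have ha : 0 ≤ a := (hsec ξ).1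
  have hb : 0 ≤ b := (hsec η).1
  -- diagonal bound
  have habs : ∀ x : Fin d → ℂ, ‖C.mulVec x ⬝ᵥ star x‖ ≤ K * (C.mulVec x ⬝ᵥ star x).re := by
    intro x
    obtain ⟨h1, h2⟩ := hsec x
    calc ‖C.mulVec x ⬝ᵥ star x‖
        ≤ |(C.mulVec x ⬝ᵥ star x).re| + |(C.mulVec x ⬝ᵥ star x).im| :=
          Complex.norm_le_abs_re_add_abs_im _
      _ ≤ (C.mulVec x ⬝ᵥ star x).re + Real.tan θ * (C.mulVec x ⬝ᵥ star x).re := by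
          rw [abs_of_nonneg h1]; linarith
      _ = K * (C.mulVec x ⬝ᵥ star x).re := by ring
  -- polarisation bound
  have hpol : ∀ x y : Fin d → ℂ, ‖C.mulVec x ⬝ᵥ star y‖ ≤
      K * ((C.mulVec x ⬝ᵥ star x).re + (C.mulVec y ⬝ᵥ star y).re) := by
    intro x y
    have h4 : (4:ℝ) * ‖C.mulVec x ⬝ᵥ star y‖ = ‖4 * (C.mulVec x ⬝ᵥ star y)‖ := by
      rw [norm_mul]; norm_num
    set A1 := C.mulVec (x+y) ⬝ᵥ star (x+y) with hA1
    set A2 := C.mulVec (x-y) ⬝ᵥ star (x-y) with hA2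
    set A3 := C.mulVec (x + Complex.I • y) ⬝ᵥ star (x + Complex.I • y) with hA3
    set A4 := C.mulVec (x - Complex.I • y) ⬝ᵥ star (x - Complex.I • y) with hA4
    have hnorm : ‖4 * (C.mulVec x ⬝ᵥ star y)‖ ≤ ‖A1‖ + ‖A2‖ + ‖A3‖ + ‖A4‖ := by
      rw [stmt3_pol d C x y]
      calc ‖A1 - A2 + Complex.I * (A3 - A4)‖
          ≤ ‖A1 - A2‖ + ‖Complex.I * (A3 - A4)‖ := norm_add_le _ _
        _ = ‖A1 - A2‖ + ‖A3 - A4‖ := by rw [norm_mul, Complex.norm_I, one_mul]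
        _ ≤ (‖A1‖ + ‖A2‖) + (‖A3‖ + ‖A4‖) :=
            add_le_add (norm_sub_le _ _) (norm_sub_le _ _)
        _ = ‖A1‖ + ‖A2‖ + ‖A3‖ + ‖A4‖ := by ring
    have hsumre : A1.re + A2.re + A3.re + A4.re =
        4 * (C.mulVec x ⬝ᵥ star x).re + 4 * (C.mulVec y ⬝ᵥ star y).re := by
      have hc := stmt3_sum d C x y
      rw [← hA1, ← hA2, ← hA3, ← hA4,
        show (4:ℂ) = ((4:ℝ):ℂ) by norm_num] at hc
      have := congrArg Complex.re hc
      simp only [Complex.add_re, Complex.re_ofReal_mul] at this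
      linarith
    have hb1 := habs (x+y)
    have hb2 := habs (x-y)
    have hb3 := habs (x + Complex.I • y)
    have hb4 := habs (x - Complex.I • y)
    rw [← hA1] at hb1; rw [← hA2] at hb2; rw [← hA3] at hb3; rw [← hA4] at hb4
    nlinarith [h4, hnorm, norm_nonneg (C.mulVec x ⬝ᵥ star y)]
  -- scaled bound
  have hscale : ∀ t : ℝ, 0 < t →
      ‖C.mulVec ξ ⬝ᵥ star η‖ ≤ K * (t^2 * a + (t⁻¹)^2 * b) := by
    intro t ht
    have := hpol ((t:ℂ) • ξ) (((t⁻¹:ℝ):ℂ) • η)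
    rw [stmt3_scale_eq d C ξ η t ht, stmt3_scale_re, stmt3_scale_re] at this
    exact this
  -- approximate bound
  have key : ∀ δ : ℝ, 0 < δ →
      ‖C.mulVec ξ ⬝ᵥ star η‖ ≤ 2 * K * Real.sqrt (a + δ) * Real.sqrt (b + δ) := by
    intro δ hδ
    set sa := Real.sqrt (a + δ) with hsa
    set sb := Real.sqrt (b + δ) with hsb
    have hsa0 : 0 < sa := Real.sqrt_pos.mpr (by linarith)
    have hsb0 : 0 < sb := Real.sqrt_pos.mpr (by linarith)
    have hsa2 : sa^2 = a + δ := Real.sq_sqrt (by linarith)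
    have hsb2 : sb^2 = b + δ := Real.sq_sqrt (by linarith)
    set t := Real.sqrt (sb / sa) with ht_def
    have ht0 : 0 < t := Real.sqrt_pos.mpr (by positivity)
    have ht2 : t^2 = sb / sa := Real.sq_sqrt (by positivity)
    have hscaled := hscale t ht0
    have hti2 : (t⁻¹)^2 = sa / sb := by
      rw [inv_pow, ht2]
      field_simp
    calc ‖C.mulVec ξ ⬝ᵥ star η‖ ≤ K * (t^2 * a + (t⁻¹)^2 * b) := hscaled
      _ ≤ K * (t^2 * (a + δ) + (t⁻¹)^2 * (b + δ)) := by
          apply mul_le_mul_of_nonneg_left _ hK0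
          have h1 : t^2 * a ≤ t^2 * (a + δ) := by nlinarith [sq_nonneg t]
          have h2 : (t⁻¹)^2 * b ≤ (t⁻¹)^2 * (b + δ) := by nlinarith [sq_nonneg t⁻¹]
          linarith
      _ = 2 * K * sa * sb := by
          rw [ht2, hti2, ← hsa2, ← hsb2]
          field_simp
          ring
  -- pass to the limit δ → 0⁺
  have hcont : Filter.Tendsto (fun δ : ℝ => 2 * K * Real.sqrt (a + δ) * Real.sqrt (b + δ))
      (nhdsWithin 0 (Set.Ioi 0)) (nhds (2 * K * Real.sqrt a * Real.sqrt b)) := by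
    have hc : Continuous (fun δ : ℝ => 2 * K * Real.sqrt (a + δ) * Real.sqrt (b + δ)) := by
      fun_prop
    have := (hc.continuousAt (x := 0)).tendsto.mono_left
      (nhdsWithin_le_nhds (s := Set.Ioi (0:ℝ)))
    simpa using this
  exact ge_of_tendsto hcont (Filter.eventually_of_mem self_mem_nhdsWithin
    (fun δ hδ => key δ hδ))
end

section
/- Let R_s be a real symmetric positive semidefinite d×d matrix and Q a complex d×d matrix. Suppose there exists M > 0 such that |(Q ξ, ξ)| ≤ M (R_s ξ, ξ) for all ξ ∈ ℂ^d. Then ‖Q ξ‖² ≤ 4 M² ‖R_s‖ (R_s ξ, ξ) for all ξ ∈ ℂ^d, where ‖R_s‖ denotes the operator norm of R_s. -/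
/-!
Over `ℂ` a sesquilinear form is determined by its diagonal through polarization, so the bound
`|q(x, x)| ≤ M r(x, x)` yields `|q(x, y)| ≤ M (r(x, x) + r(y, y))`. Replacing `x` by `t x` for
real `t` makes `M r(x, x) t² - |q(x, y)| t + M r(y, y)` nonnegative, and its discriminant gives
`|q(x, y)|² ≤ 4 M² r(x, x) r(y, y)`. For `q(x, y) = (Q y, x)`, `r(x, y) = (R_s y, x)`, `x = Qξ`
and `y = ξ` this reads `‖Qξ‖⁴ ≤ 4 M² (R_s Qξ, Qξ) (R_s ξ, ξ) ≤ 4 M² N ‖Qξ‖² (R_s ξ, ξ)`.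
-/

open Matrix Complex

namespace LinearMap

variable {E : Type*} [AddCommGroup E] [Module ℂ E] (q r : E →ₗ⋆[ℂ] E →ₗ[ℂ] ℂ)

theorem sesq_polarization (x y : E) :
    4 * q x y = q (x + y) (x + y) - q (x - y) (x - y)
      - I * q (x + I • y) (x + I • y) + I * q (x - I • y) (x - I • y) := by
  simp only [map_add, map_sub, map_smulₛₗ, add_apply, sub_apply, smul_apply, smul_eq_mul,
    conj_I]
  linear_combination (-2 * q y x + 2 * q x y) * I_sq

theorem sesq_parallelogram (x y : E) :
    r (x + y) (x + y) + r (x - y) (x - y) + r (x + I • y) (x + I • y) + r (x - I • y) (x - I • y)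
      = 4 * r x x + 4 * r y y := by
  simp only [map_add, map_sub, map_smulₛₗ, add_apply, sub_apply, smul_apply, smul_eq_mul,
    conj_I]
  linear_combination (-2 * r y y) * I_sq

variable {q r} {M : ℝ}

theorem norm_apply_le_of_norm_apply_self_le (hq : ∀ x, ‖q x x‖ ≤ M * (r x x).re) (x y : E) :
    ‖q x y‖ ≤ M * ((r x x).re + (r y y).re) := by
  have hpar := congrArg (M * re ·) (sesq_parallelogram r x y)
  simp only [add_re, mul_re, re_ofNat, im_ofNat, zero_mul, sub_zero] at hpar
  have htri : ∀ a b c d : ℂ, ‖a - b - I * c + I * d‖ ≤ ‖a‖ + ‖b‖ + ‖c‖ + ‖d‖ := by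
    intro a b c d
    simpa [norm_mul, sub_eq_add_neg] using
      norm_add₄_le (a := a) (b := -b) (c := -(I * c)) (d := I * d)
  have h4 : 4 * ‖q x y‖ ≤ ‖q (x + y) (x + y)‖ + ‖q (x - y) (x - y)‖
      + ‖q (x + I • y) (x + I • y)‖ + ‖q (x - I • y) (x - I • y)‖ := by
    calc 4 * ‖q x y‖ = ‖4 * q x y‖ := by simp
      _ ≤ _ := sesq_polarization q x y ▸ htri _ _ _ _
  linarith [hq (x + y), hq (x - y), hq (x + I • y), hq (x - I • y)]

theorem sq_norm_apply_le_of_norm_apply_self_le (hq : ∀ x, ‖q x x‖ ≤ M * (r x x).re) (x y : E) :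
    ‖q x y‖ ^ 2 ≤ 4 * M ^ 2 * (r x x).re * (r y y).re := by
  have hquad (t : ℝ) : 0 ≤ M * (r x x).re * (t * t) + -‖q x y‖ * t + M * (r y y).re := by
    have h := norm_apply_le_of_norm_apply_self_le hq ((t : ℂ) • x) y
    simp only [map_smulₛₗ, smul_apply, smul_eq_mul, norm_mul, conj_ofReal, norm_real,
      Real.norm_eq_abs, RingHom.id_apply, ← mul_assoc, ← ofReal_mul, re_ofReal_mul] at h
    nlinarith [le_abs_self t, norm_nonneg (q x y)]
  have := discrim_le_zero hquad
  rw [discrim] at this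
  linarith

end LinearMap

namespace Matrix

variable {n : Type*} [Fintype n]

def sesqForm (A : Matrix n n ℂ) : (n → ℂ) →ₗ⋆[ℂ] (n → ℂ) →ₗ[ℂ] ℂ :=
  LinearMap.mk₂'ₛₗ (starRingEnd ℂ) (RingHom.id ℂ) (fun x y => A *ᵥ y ⬝ᵥ star x)
    (fun _ _ _ => by simp [dotProduct_add])
    (fun _ _ _ => by simp [star_smul, dotProduct_smul])
    (fun _ _ _ => by simp [mulVec_add, add_dotProduct])
    (fun _ _ _ => by simp [mulVec_smul, smul_dotProduct])

@[simp]
theorem sesqForm_apply (A : Matrix n n ℂ) (x y : n → ℂ) : A.sesqForm x y = A *ᵥ y ⬝ᵥ star x :=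
  rfl

theorem dotProduct_star_self_eq_sum_sq_norm (v : n → ℂ) :
    v ⬝ᵥ star v = ((∑ i, ‖v i‖ ^ 2 : ℝ) : ℂ) := by
  simp [dotProduct, mul_conj, normSq_eq_norm_sq]

end Matrix

theorem stmt_6_general (d : ℕ) (Rs : Matrix (Fin d) (Fin d) ℝ)
    (N : ℝ)
    (hN : ∀ η : Fin d → ℂ,
      (((Rs.map (Complex.ofReal)).mulVec η) ⬝ᵥ star η).re ≤ N * ∑ i, ‖η i‖ ^ 2)
    (Q : Matrix (Fin d) (Fin d) ℂ) (M : ℝ) (hM : 0 < M)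
    (hQ : ∀ ξ : Fin d → ℂ,
      ‖Q.mulVec ξ ⬝ᵥ star ξ‖ ≤ M * (((Rs.map (Complex.ofReal)).mulVec ξ) ⬝ᵥ star ξ).re)
    (ξ : Fin d → ℂ) :
    ∑ i, ‖Q.mulVec ξ i‖ ^ 2 ≤
      4 * M ^ 2 * N * (((Rs.map (Complex.ofReal)).mulVec ξ) ⬝ᵥ star ξ).re := by
  set A := Rs.map Complex.ofReal
  set S := ∑ i, ‖Q.mulVec ξ i‖ ^ 2
  set a := (A *ᵥ ξ ⬝ᵥ star ξ).re
  have hS : 0 ≤ S := by positivity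
  have ha : 0 ≤ a := nonneg_of_mul_nonneg_right ((norm_nonneg _).trans (hQ ξ)) hM
  have hNa : 0 ≤ N * a := by
    rcases le_or_gt 0 N with hN0 | hN0
    · exact mul_nonneg hN0 ha
    · have : a ≤ 0 := (hN ξ).trans (mul_nonpos_of_nonpos_of_nonneg hN0.le (by positivity))
      nlinarith
  have hCS := LinearMap.sq_norm_apply_le_of_norm_apply_self_le
    (q := Q.sesqForm) (r := A.sesqForm) hQ (Q *ᵥ ξ) ξ
  simp only [Matrix.sesqForm_apply, Matrix.dotProduct_star_self_eq_sum_sq_norm, norm_real,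
    Real.norm_eq_abs, sq_abs] at hCS
  have hSS : S ^ 2 ≤ 4 * M ^ 2 * N * a * S := by
    calc S ^ 2 ≤ 4 * M ^ 2 * (A *ᵥ (Q *ᵥ ξ) ⬝ᵥ star (Q *ᵥ ξ)).re * a := hCS
      _ ≤ 4 * M ^ 2 * (N * S) * a := by gcongr; exact hN _
      _ = 4 * M ^ 2 * N * a * S := by ring
  nlinarith [mul_nonneg (sq_nonneg M) hNa]

/-- If `R_s` is real symmetric positive semidefinite with operator-norm bound `N`
(expressed via its quadratic form), `Q` is a complex matrix and
`|(Qξ,ξ)| ≤ M (R_s ξ, ξ)` for all `ξ ∈ ℂ^d`, then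
`‖Qξ‖² ≤ 4 M² N (R_s ξ, ξ)`. -/
theorem stmt_6 (d : ℕ) (Rs : Matrix (Fin d) (Fin d) ℝ) (hRs : Rsᵀ = Rs)
    (hPSD : ∀ ξ : Fin d → ℝ, 0 ≤ Rs.mulVec ξ ⬝ᵥ ξ)
    (N : ℝ)
    (hN : ∀ η : Fin d → ℂ,
      (((Rs.map (Complex.ofReal)).mulVec η) ⬝ᵥ star η).re ≤ N * ∑ i, ‖η i‖ ^ 2)
    (Q : Matrix (Fin d) (Fin d) ℂ) (M : ℝ) (hM : 0 < M)
    (hQ : ∀ ξ : Fin d → ℂ,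
      ‖Q.mulVec ξ ⬝ᵥ star ξ‖ ≤ M * (((Rs.map (Complex.ofReal)).mulVec ξ) ⬝ᵥ star ξ).re)
    (ξ : Fin d → ℂ) :
    ∑ i, ‖Q.mulVec ξ i‖ ^ 2 ≤
      4 * M ^ 2 * N * (((Rs.map (Complex.ofReal)).mulVec ξ) ⬝ᵥ star ξ).re :=
  stmt_6_general d Rs N hN Q M hM hQ ξ
end

section
/- Let p ∈ (1, ∞) and θ ∈ (0, π/2) with |p - 2| tan θ ≤ 2√(p-1). Let R_s be a real symmetric positive semidefinite d×d matrix and B_s a real symmetric d×d matrix with |(B_s x, y)| ≤ (tan θ)(R_s x, x)^{1/2}(R_s y, y)^{1/2} for all x, y ∈ ℝ^d. Then for all ξ, η ∈ ℝ^d, (p-1)(R_s ξ, ξ) + (R_s η, η) + (p-2)(B_s ξ, η) ≥ 0. -/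
open Matrix

/-- Key algebraic inequality for `L_p`-accretivity: if `|p-2| tan θ ≤ 2√(p-1)`,
`R_s` is real symmetric positive semidefinite and `B_s` real symmetric with
`|(B_s x, y)| ≤ tan θ √(R_s x, x) √(R_s y, y)`, then
`(p-1)(R_s ξ,ξ) + (R_s η,η) + (p-2)(B_s ξ,η) ≥ 0`. -/
theorem stmt_15 (d : ℕ) (p θ : ℝ) (hp : 1 < p) (hθ : θ ∈ Set.Ioo 0 (Real.pi / 2))
    (hpθ : |p - 2| * Real.tan θ ≤ 2 * Real.sqrt (p - 1))
    (Rs Bs : Matrix (Fin d) (Fin d) ℝ) (hRs : Rsᵀ = Rs) (hBs : Bsᵀ = Bs)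
    (hPSD : ∀ ξ : Fin d → ℝ, 0 ≤ Rs.mulVec ξ ⬝ᵥ ξ)
    (hB : ∀ x y : Fin d → ℝ, |Bs.mulVec x ⬝ᵥ y| ≤
      Real.tan θ * Real.sqrt (Rs.mulVec x ⬝ᵥ x) * Real.sqrt (Rs.mulVec y ⬝ᵥ y))
    (ξ η : Fin d → ℝ) :
    0 ≤ (p - 1) * (Rs.mulVec ξ ⬝ᵥ ξ) + (Rs.mulVec η ⬝ᵥ η) + (p - 2) * (Bs.mulVec ξ ⬝ᵥ η) := by
  set A := Rs.mulVec ξ ⬝ᵥ ξ with hAdef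
  set C := Rs.mulVec η ⬝ᵥ η with hCdef
  set B := Bs.mulVec ξ ⬝ᵥ η with hBdef
  have hA : 0 ≤ A := hPSD ξ
  have hC : 0 ≤ C := hPSD η
  set a := Real.sqrt A with ha
  set b := Real.sqrt C with hb
  have ha2 : a ^ 2 = A := Real.sq_sqrt hA
  have hb2 : b ^ 2 = C := Real.sq_sqrt hC
  have han : 0 ≤ a := Real.sqrt_nonneg _
  have hbn : 0 ≤ b := Real.sqrt_nonneg _
  have hp1 : (0:ℝ) ≤ p - 1 := by linarith
  have hs2 : Real.sqrt (p - 1) ^ 2 = p - 1 := Real.sq_sqrt hp1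
  have hBbound : |B| ≤ Real.tan θ * a * b := hB ξ η
  have habs : |p - 2| * |B| ≤ 2 * Real.sqrt (p - 1) * (a * b) := by
    have htan : 0 ≤ Real.tan θ := le_of_lt (Real.tan_pos_of_pos_of_lt_pi_div_two hθ.1 hθ.2)
    calc |p - 2| * |B| ≤ |p - 2| * (Real.tan θ * a * b) := by
          exact mul_le_mul_of_nonneg_left hBbound (abs_nonneg _)
      _ = (|p - 2| * Real.tan θ) * (a * b) := by ring
      _ ≤ 2 * Real.sqrt (p - 1) * (a * b) :=
          mul_le_mul_of_nonneg_right hpθ (mul_nonneg han hbn)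
  have h1 : -((p-2) * B) ≤ |p - 2| * |B| := by
    rw [← abs_mul]
    exact neg_le_of_neg_le (neg_abs_le _)
  have h2 : 0 ≤ (Real.sqrt (p-1) * a - b) ^ 2 := sq_nonneg _
  nlinarith [h1, habs, h2, hs2, ha2, hb2]
end

section
/- Let R_s be a real symmetric positive semidefinite d×d matrix and K a real antisymmetric d×d matrix that commutes with R_s. Suppose K = W D W* with W unitary and D diagonal, where W also diagonalizes R_s, and |D_{kk}|² ≤ c (W* R_s W)_{kk} for all k. Then for every complex d×d matrix U, ‖K U‖²_HS ≤ c · tr(U* R_s U). -/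
open Matrix

private lemma conj_mul_self (z : ℂ) : star z * z = ((‖z‖ ^ 2 : ℝ) : ℂ) := by
  rw [show (star z) = (starRingEnd ℂ) z from rfl, mul_comm, Complex.mul_conj,
    Complex.normSq_eq_norm_sq]

private lemma conj_mul_self_re (z : ℂ) : (star z * z).re = ‖z‖ ^ 2 := by
  rw [conj_mul_self, Complex.ofReal_re]

private lemma hs_eq {d : ℕ} (A : Matrix (Fin d) (Fin d) ℂ) :
    ∑ i, ∑ j, ‖A i j‖ ^ 2 = (Aᴴ * A).trace.re := by
  simp only [Matrix.trace, Matrix.diag, Matrix.mul_apply, Matrix.conjTranspose_apply,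
    Complex.re_sum]
  rw [Finset.sum_comm]
  exact Finset.sum_congr rfl fun j _ => Finset.sum_congr rfl fun i _ =>
    (conj_mul_self_re (A i j)).symm

private lemma diag_trace {d : ℕ} (M V : Matrix (Fin d) (Fin d) ℂ) (hM : M.IsDiag) :
    (Vᴴ * M * V).trace = ∑ i, M i i * ∑ j, ((‖V i j‖ ^ 2 : ℝ) : ℂ) := by
  have hMV : ∀ i j, (M * V) i j = M i i * V i j := by
    intro i j
    rw [Matrix.mul_apply, Finset.sum_eq_single i]
    · intro b _ hb
      rw [hM (Ne.symm hb), zero_mul]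
    · simp
  rw [Matrix.mul_assoc]
  simp only [Matrix.trace, Matrix.diag, Matrix.mul_apply, Matrix.conjTranspose_apply, hMV]
  rw [Finset.sum_comm]
  refine Finset.sum_congr rfl fun i _ => ?_
  rw [Finset.mul_sum]
  refine Finset.sum_congr rfl fun j _ => ?_
  rw [show star (V i j) * (M i i * V i j)
      = M i i * (star (V i j) * V i j) by ring, conj_mul_self]

/-- Let `R_s` be real symmetric positive semidefinite and `K` real antisymmetric,
commuting with `R_s`; suppose `W` is unitary, simultaneously diagonalizing `K` (as
`K = W D W*` with `D` diagonal) and `R_s` (i.e. `W* R_s W` is diagonal), with the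
eigenvalue bound `|D_{kk}|² ≤ c (W* R_s W)_{kk}`. Then for every complex matrix `U`,
`‖K U‖²_HS ≤ c tr(U* R_s U)`. -/
theorem stmt_17 (d : ℕ) (Rs K : Matrix (Fin d) (Fin d) ℝ)
    (hRs : Rsᵀ = Rs) (hK : Kᵀ = -K)
    (hPSD : ∀ ξ : Fin d → ℝ, 0 ≤ Rs.mulVec ξ ⬝ᵥ ξ)
    (hcomm : Rs * K = K * Rs)
    (W : Matrix (Fin d) (Fin d) ℂ) (hW : W ∈ Matrix.unitaryGroup (Fin d) ℂ)
    (D : Matrix (Fin d) (Fin d) ℂ) (hD : D.IsDiag)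
    (hKdiag : K.map (Complex.ofReal) = W * D * W.conjTranspose)
    (hRdiag : (W.conjTranspose * (Rs.map (Complex.ofReal)) * W).IsDiag)
    (c : ℝ)
    (hbound : ∀ k, ‖D k k‖ ^ 2 ≤ c * ((W.conjTranspose * (Rs.map (Complex.ofReal)) * W) k k).re)
    (U : Matrix (Fin d) (Fin d) ℂ) :
    ∑ i, ∑ j, ‖((K.map (Complex.ofReal)) * U) i j‖ ^ 2 ≤
      c * ((U.conjTranspose * (Rs.map (Complex.ofReal)) * U).trace).re := by
  have h1 : Wᴴ * W = 1 := Matrix.mem_unitaryGroup_iff'.mp hW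
  have h2 : W * Wᴴ = 1 := Matrix.mem_unitaryGroup_iff.mp hW
  set V : Matrix (Fin d) (Fin d) ℂ := Wᴴ * U with hV
  set R : Matrix (Fin d) (Fin d) ℂ := Wᴴ * (Rs.map Complex.ofReal) * W with hR
  set A : Matrix (Fin d) (Fin d) ℂ := (K.map Complex.ofReal) * U with hA
  have cancel1 : ∀ X : Matrix (Fin d) (Fin d) ℂ, Wᴴ * (W * X) = X := fun X => by
    rw [← Matrix.mul_assoc, h1, Matrix.one_mul]
  have cancel2 : ∀ X : Matrix (Fin d) (Fin d) ℂ, W * (Wᴴ * X) = X := fun X => by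
    rw [← Matrix.mul_assoc, h2, Matrix.one_mul]
  have hAVD : Aᴴ * A = Vᴴ * (Dᴴ * D) * V := by
    rw [hA, hKdiag, hV]
    simp only [Matrix.conjTranspose_mul, Matrix.conjTranspose_conjTranspose, Matrix.mul_assoc]
    rw [cancel1]
  have hURV : Uᴴ * (Rs.map Complex.ofReal) * U = Vᴴ * R * V := by
    rw [hR, hV]
    simp only [Matrix.conjTranspose_mul, Matrix.conjTranspose_conjTranspose, Matrix.mul_assoc]
    rw [cancel2, cancel2]
  have hDD_diag : (Dᴴ * D).IsDiag := by
    intro i j hij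
    rw [Matrix.mul_apply]
    refine Finset.sum_eq_zero fun k _ => ?_
    rcases ne_or_eq k i with hki | rfl
    · rw [Matrix.conjTranspose_apply, hD hki]
      simp
    · rw [hD hij, mul_zero]
  have hDDii : ∀ i, (Dᴴ * D) i i = ((‖D i i‖ ^ 2 : ℝ) : ℂ) := by
    intro i
    rw [Matrix.mul_apply, Finset.sum_eq_single i]
    · rw [Matrix.conjTranspose_apply, conj_mul_self]
    · intro b _ hb
      rw [hD hb, mul_zero]
    · simp
  -- LHS computation
  have hL : ∑ i, ∑ j, ‖A i j‖ ^ 2 = ∑ i, ‖D i i‖ ^ 2 * ∑ j, ‖V i j‖ ^ 2 := by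
    rw [hs_eq, hAVD, diag_trace _ _ hDD_diag, Complex.re_sum]
    refine Finset.sum_congr rfl fun i _ => ?_
    rw [hDDii i]
    have hcast : (∑ j, ((‖V i j‖ ^ 2 : ℝ) : ℂ)) = ((∑ j, ‖V i j‖ ^ 2 : ℝ) : ℂ) := by
      push_cast; rfl
    rw [hcast, ← Complex.ofReal_mul, Complex.ofReal_re]
  -- RHS computation
  have hRe : ((Uᴴ * (Rs.map Complex.ofReal) * U).trace).re
      = ∑ i, (R i i).re * ∑ j, ‖V i j‖ ^ 2 := by
    rw [hURV, diag_trace _ _ hRdiag, Complex.re_sum]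
    refine Finset.sum_congr rfl fun i _ => ?_
    have : (∑ j, ((‖V i j‖ ^ 2 : ℝ) : ℂ)) = ((∑ j, ‖V i j‖ ^ 2 : ℝ) : ℂ) := by push_cast; rfl
    rw [this, Complex.mul_re, Complex.ofReal_re, Complex.ofReal_im, mul_zero, sub_zero]
  rw [hRe, Finset.mul_sum]
  calc ∑ i, ∑ j, ‖A i j‖ ^ 2 = ∑ i, ‖D i i‖ ^ 2 * ∑ j, ‖V i j‖ ^ 2 := hL
    _ ≤ ∑ i, (c * (R i i).re) * ∑ j, ‖V i j‖ ^ 2 := by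
        refine Finset.sum_le_sum fun i _ => ?_
        refine mul_le_mul_of_nonneg_right (hbound i) ?_
        exact Finset.sum_nonneg fun j _ => sq_nonneg _
    _ = ∑ i, c * ((R i i).re * ∑ j, ‖V i j‖ ^ 2) := by
        refine Finset.sum_congr rfl fun i _ => ?_
        ring
end

section
/- Let φ ∈ W^{2,∞}(ℝ^d) be real-valued with φ ≥ 0, and let C̃ = R̃ + iB̃ be a constant d×d complex matrix taking values in Σ_θ, with R̃_s = (R̃+R̃ᵀ)/2 and B̃_a = (B̃-B̃ᵀ)/2. Set C = φ C̃, so R_s = φ R̃_s and B_a = φ B̃_a. Then for every l and every complex symmetric d×d matrix U, ‖(∂_l B_a) U‖²_HS ≤ 8 ‖φ‖_{W^{2,∞}} ‖R̃_s‖ tr(U R_s Ū). -/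
/-!
Two inequalities are multiplied.

Glaeser: if `g ≥ 0` on `ℝ` and `g'' ≤ M`, the second-order Taylor bound
`0 ≤ g (x + s) ≤ g x + g' x * s + M / 2 * s ^ 2` is a nonnegative quadratic in `s`, so its
discriminant `g' x ^ 2 - 2 * M * g x` is `≤ 0`. Restricting `φ` to lines gives
`(∂_l φ)² ≤ 2 M φ`.

Matrix part: the Hermitian part of `C̃` is `R̃_s + i B̃_a ≥ 0`, and its transpose `R̃_s - i B̃_a`
is positive as well. For `w = B̃_a η` one has `((R̃_s ± i B̃_a) η, w) = (R̃_s η, w) ± i ‖w‖²`, so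
Cauchy–Schwarz for the two forms bounds `(Im (R̃_s η, w) ± ‖w‖²)²`; adding the two bounds gives
`‖w‖⁴ ≤ 2 (R̃_s w, w) (R̃_s η, η) ≤ 2 N ‖w‖² (R̃_s η, η)`. Summed over the columns of `Uᴴ`,
which for symmetric `U` are the conjugates of the columns of `U`, this is
`‖B̃_a U‖²_HS ≤ 2 N tr (U R̃_s Ū)`.
-/

open Matrix

theorem le_taylor_of_deriv2_le_of_le {g g' g'' : ℝ → ℝ} {M x t : ℝ}
    (hg : ∀ s, HasDerivAt g (g' s) s) (hg' : ∀ s, HasDerivAt g' (g'' s) s)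
    (hM : ∀ s, g'' s ≤ M) (hxt : x ≤ t) :
    g t ≤ g x + g' x * (t - x) + M / 2 * (t - x) ^ 2 := by
  have hderiv : ∀ s ∈ Set.Icc x t, g' s ≤ g' x + M * (s - x) := by
    refine image_le_of_deriv_right_le_deriv_boundary (B := fun s => g' x + M * (s - x))
      (fun s _ => (hg' s).continuousAt.continuousWithinAt)
      (fun s _ => (hg' s).hasDerivWithinAt) (by simp) (by fun_prop) (fun s _ => ?_)
      (fun s _ => hM s)
    exact (((((hasDerivAt_id' s).sub_const x).const_mul M).const_add (g' x)).congr_deriv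
      (mul_one M)).hasDerivWithinAt
  refine image_le_of_deriv_right_le_deriv_boundary
    (B := fun s => g x + g' x * (s - x) + M / 2 * (s - x) ^ 2)
    (fun s _ => (hg s).continuousAt.continuousWithinAt)
    (fun s _ => (hg s).hasDerivWithinAt) (by simp) (by fun_prop) (fun s _ => ?_)
    (fun s hs => hderiv s (Set.Ico_subset_Icc_self hs)) ⟨hxt, le_rfl⟩
  have hB := ((((hasDerivAt_id' s).sub_const x).const_mul (g' x)).const_add (g x)).add
    ((((hasDerivAt_id' s).sub_const x).pow 2).const_mul (M / 2))
  exact (hB.congr_deriv (by ring)).hasDerivWithinAt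

theorem le_taylor_of_deriv2_le {g g' g'' : ℝ → ℝ} {M : ℝ}
    (hg : ∀ s, HasDerivAt g (g' s) s) (hg' : ∀ s, HasDerivAt g' (g'' s) s)
    (hM : ∀ s, g'' s ≤ M) (x t : ℝ) :
    g t ≤ g x + g' x * (t - x) + M / 2 * (t - x) ^ 2 := by
  rcases le_total x t with hxt | htx
  · exact le_taylor_of_deriv2_le_of_le hg hg' hM hxt
  · have hneg : ∀ {f f' : ℝ → ℝ}, (∀ s, HasDerivAt f (f' s) s) →
        ∀ s, HasDerivAt (fun s => f (-s)) (-f' (-s)) s := fun hf s =>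
      ((hf (-s)).comp s (hasDerivAt_neg s)).congr_deriv (mul_neg_one _)
    have := le_taylor_of_deriv2_le_of_le (hneg hg)
      (fun s => ((hneg hg' s).neg).congr_deriv (neg_neg _)) (fun s => hM (-s)) (neg_le_neg htx)
    simp only [neg_neg] at this
    linarith

theorem sq_deriv_le_two_mul_of_nonneg {g g' g'' : ℝ → ℝ} {M : ℝ}
    (hg : ∀ s, HasDerivAt g (g' s) s) (hg' : ∀ s, HasDerivAt g' (g'' s) s)
    (hM : ∀ s, g'' s ≤ M) (hpos : ∀ s, 0 ≤ g s) (x : ℝ) :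
    g' x ^ 2 ≤ 2 * M * g x := by
  have hquad : ∀ s, 0 ≤ M / 2 * (s * s) + g' x * s + g x := fun s => by
    have := le_taylor_of_deriv2_le hg hg' hM x (x + s)
    rw [add_sub_cancel_left] at this
    nlinarith [hpos (x + s)]
  have := discrim_le_zero hquad
  rw [discrim] at this
  linarith

theorem sq_fderiv_le_two_mul_of_nonneg {E : Type*} [NormedAddCommGroup E] [NormedSpace ℝ E]
    {φ : E → ℝ} (hφ : ContDiff ℝ 2 φ) (hpos : ∀ y, 0 ≤ φ y) (v : E) {M : ℝ}
    (hM : ∀ y, fderiv ℝ (fun z => fderiv ℝ φ z v) y v ≤ M) (x : E) :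
    fderiv ℝ φ x v ^ 2 ≤ 2 * M * φ x := by
  have hline : ∀ {f : E → ℝ}, Differentiable ℝ f →
      ∀ t : ℝ, HasDerivAt (fun t => f (x + t • v)) (fderiv ℝ f (x + t • v) v) t := fun hf t =>
    (hf _).hasFDerivAt.comp_hasDerivAt t
      ((((hasDerivAt_id' t).smul_const v).const_add x).congr_deriv (one_smul ℝ v))
  have hφ' : Differentiable ℝ fun z => fderiv ℝ φ z v :=
    ((hφ.fderiv_right one_add_one_eq_two.le).clm_apply contDiff_const).differentiable one_ne_zero
  simpa using sq_deriv_le_two_mul_of_nonneg (hline (hφ.differentiable two_ne_zero)) (hline hφ')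
    (fun _ => hM _) (fun _ => hpos _) 0

namespace Matrix

open Complex
open scoped ComplexOrder

variable {n : Type*}

/- For `C̃ = R̃ + i B̃` with `R̃`, `B̃` real, `symmPartRe C̃` and `antisymmPartIm C̃` are the
paper's `R̃_s = (R̃ + R̃ᵀ) / 2` and `B̃_a = (B̃ - B̃ᵀ) / 2`, kept as complex matrices with real
entries. -/
noncomputable def symmPartRe (C : Matrix n n ℂ) : Matrix n n ℂ :=
  of fun k m => (((C k m).re + (C m k).re) / 2 : ℂ)

noncomputable def antisymmPartIm (C : Matrix n n ℂ) : Matrix n n ℂ :=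
  of fun k m => ((((C k m).im - (C m k).im) / 2 : ℝ) : ℂ)

theorem symmPartRe_add_I_smul_antisymmPartIm (C : Matrix n n ℂ) :
    C.symmPartRe + I • C.antisymmPartIm = (2 : ℂ)⁻¹ • (C + Cᴴ) := by
  ext k m
  apply Complex.ext <;> simp [symmPartRe, antisymmPartIm] <;> ring

theorem transpose_symmPartRe_add_I_smul_antisymmPartIm (C : Matrix n n ℂ) :
    (C.symmPartRe + I • C.antisymmPartIm)ᵀ = C.symmPartRe - I • C.antisymmPartIm := by
  ext k m
  simp only [symmPartRe, antisymmPartIm, ofReal_div, ofReal_sub, ofReal_ofNat, smul_of, of_add_of,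
    of_sub_of, transpose_apply, of_apply, Pi.add_apply, Pi.sub_apply, Pi.smul_apply, smul_eq_mul]
  ring

theorem map_conj_antisymmPartIm (C : Matrix n n ℂ) :
    C.antisymmPartIm.map (starRingEnd ℂ) = C.antisymmPartIm := by
  ext k m
  simp only [antisymmPartIm, map_apply, of_apply, conj_ofReal]

variable [Fintype n]

theorem PosSemidef.norm_sq_mulVec_dotProduct_le {𝕜 : Type*} [RCLike 𝕜] {A : Matrix n n 𝕜}
    (hA : A.PosSemidef) (x y : n → 𝕜) :
    ‖(A *ᵥ x) ⬝ᵥ star y‖ ^ 2 ≤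
      RCLike.re ((A *ᵥ x) ⬝ᵥ star x) * RCLike.re ((A *ᵥ y) ⬝ᵥ star y) := by
  let := A.toSeminormedAddCommGroup hA
  let := A.toInnerProductSpace hA
  have := inner_mul_inner_self_le (𝕜 := 𝕜) y x
  rwa [norm_inner_symm x y, ← sq, mul_comm] at this

theorem dotProduct_star_self_eq_sum_norm_sq (w : n → ℂ) :
    w ⬝ᵥ star w = ((∑ i, ‖w i‖ ^ 2 : ℝ) : ℂ) := by
  simp [dotProduct, Complex.mul_conj, Complex.normSq_eq_norm_sq]

theorem PosSemidef.sq_im_mulVec_dotProduct_le {A : Matrix n n ℂ} (hA : A.PosSemidef)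
    (x y : n → ℂ) :
    ((A *ᵥ x) ⬝ᵥ star y).im ^ 2 ≤ ((A *ᵥ x) ⬝ᵥ star x).re * ((A *ᵥ y) ⬝ᵥ star y).re :=
  (sq_le_sq' (abs_le.mp (abs_im_le_norm _)).1 (abs_le.mp (abs_im_le_norm _)).2).trans
    (hA.norm_sq_mulVec_dotProduct_le x y)

theorem PosSemidef.re_mulVec_dotProduct_nonneg {A : Matrix n n ℂ} (hA : A.PosSemidef)
    (x : n → ℂ) : 0 ≤ ((A *ᵥ x) ⬝ᵥ star x).re := by
  simpa [dotProduct_comm] using hA.re_dotProduct_nonneg x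

theorem re_add_sub_mulVec_dotProduct (R A : Matrix n n ℂ) (v w : n → ℂ) :
    (((R + A) *ᵥ v) ⬝ᵥ w).re + (((R - A) *ᵥ v) ⬝ᵥ w).re = 2 * ((R *ᵥ v) ⬝ᵥ w).re := by
  simp only [add_mulVec, sub_mulVec, add_dotProduct, sub_dotProduct, add_re, sub_re]
  ring

theorem sq_sum_norm_mulVec_sq_le {R B : Matrix n n ℂ} (hplus : (R + I • B).PosSemidef)
    (hminus : (R - I • B).PosSemidef) (η : n → ℂ) :
    (∑ i, ‖(B *ᵥ η) i‖ ^ 2) ^ 2 ≤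
      2 * ((R *ᵥ (B *ᵥ η)) ⬝ᵥ star (B *ᵥ η)).re * ((R *ᵥ η) ⬝ᵥ star η).re := by
  set w := B *ᵥ η
  set W := ∑ i, ‖w i‖ ^ 2
  set z := (R *ᵥ η) ⬝ᵥ star w
  have hplus_w : ((R + I • B) *ᵥ η) ⬝ᵥ star w = z + I * W := by
    rw [add_mulVec, add_dotProduct, smul_mulVec, smul_dotProduct,
      dotProduct_star_self_eq_sum_norm_sq, smul_eq_mul]
  have hminus_w : ((R - I • B) *ᵥ η) ⬝ᵥ star w = z - I * W := by
    rw [sub_mulVec, sub_dotProduct, smul_mulVec, smul_dotProduct,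
      dotProduct_star_self_eq_sum_norm_sq, smul_eq_mul]
  have hsum := fun v => re_add_sub_mulVec_dotProduct R (I • B) v (star v)
  have h₁ := hplus.sq_im_mulVec_dotProduct_le η w
  have h₂ := hminus.sq_im_mulVec_dotProduct_le η w
  rw [hplus_w] at h₁
  rw [hminus_w] at h₂
  simp only [add_im, sub_im, mul_im, I_re, I_im, ofReal_re, ofReal_im, zero_mul, one_mul,
    zero_add] at h₁ h₂
  nlinarith [congrArg₂ (· * ·) (hsum η) (hsum w), sq_nonneg z.im,
    mul_nonneg (hplus.re_mulVec_dotProduct_nonneg η) (hminus.re_mulVec_dotProduct_nonneg w),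
    mul_nonneg (hminus.re_mulVec_dotProduct_nonneg η) (hplus.re_mulVec_dotProduct_nonneg w)]

theorem sum_norm_mulVec_sq_le {R B : Matrix n n ℂ} (hplus : (R + I • B).PosSemidef)
    (hminus : (R - I • B).PosSemidef) {N : ℝ}
    (hN : ∀ η : n → ℂ, ((R *ᵥ η) ⬝ᵥ star η).re ≤ N * ∑ i, ‖η i‖ ^ 2) (η : n → ℂ) :
    ∑ i, ‖(B *ᵥ η) i‖ ^ 2 ≤ 2 * N * ((R *ᵥ η) ⬝ᵥ star η).re := by
  set W := ∑ i, ‖(B *ᵥ η) i‖ ^ 2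
  set r := ((R *ᵥ η) ⬝ᵥ star η).re
  have hR : ∀ v, 0 ≤ ((R *ᵥ v) ⬝ᵥ star v).re := fun v => by
    have := add_nonneg (hplus.re_mulVec_dotProduct_nonneg v) (hminus.re_mulVec_dotProduct_nonneg v)
    rw [re_add_sub_mulVec_dotProduct] at this
    linarith
  have hNr : 0 ≤ N * r := by
    rcases le_or_gt 0 N with hN0 | hN0
    · exact mul_nonneg hN0 (hR η)
    · have : r ≤ 0 := (hN η).trans
        (mul_nonpos_of_nonpos_of_nonneg hN0.le (by positivity))
      simp [le_antisymm this (hR η)]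
  have hW : W ^ 2 ≤ 2 * (N * W) * r :=
    (sq_sum_norm_mulVec_sq_le hplus hminus η).trans
      (by gcongr; exacts [hR η, hN _])
  obtain hW0 | hW0 := (show 0 ≤ W by positivity).eq_or_lt
  · rw [← hW0]
    linarith
  · nlinarith

theorem sum_sum_norm_mul_sq_le {m : Type*} [Fintype m] {R B : Matrix n n ℂ}
    (hplus : (R + I • B).PosSemidef) (hminus : (R - I • B).PosSemidef) {N : ℝ}
    (hN : ∀ η : n → ℂ, ((R *ᵥ η) ⬝ᵥ star η).re ≤ N * ∑ i, ‖η i‖ ^ 2) (V : Matrix n m ℂ) :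
    ∑ i, ∑ j, ‖(B * V) i j‖ ^ 2 ≤ 2 * N * (Vᴴ * R * V).trace.re := by
  have hdiag : ∀ j, (Vᴴ * R * V) j j = (R *ᵥ Vᵀ j) ⬝ᵥ star (Vᵀ j) := fun j => by
    rw [dotProduct_comm, Matrix.mul_assoc]
    rfl
  rw [Finset.sum_comm, trace, re_sum, Finset.mul_sum]
  refine Finset.sum_le_sum fun j _ => ?_
  rw [diag_apply, hdiag]
  exact sum_norm_mulVec_sq_le hplus hminus hN (Vᵀ j)

theorem PosSemidef.half_smul_add_conjTranspose {C : Matrix n n ℂ}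
    (hC : ∀ ξ, 0 ≤ ((C *ᵥ ξ) ⬝ᵥ star ξ).re) : ((2 : ℂ)⁻¹ • (C + Cᴴ)).PosSemidef := by
  refine PosSemidef.of_dotProduct_mulVec_nonneg ?_ fun ξ => ?_
  · simp [IsHermitian, conjTranspose_smul, add_comm]
  · have hstar : star ξ ⬝ᵥ (Cᴴ *ᵥ ξ) = star ((C *ᵥ ξ) ⬝ᵥ star ξ) := by
      rw [dotProduct_mulVec, ← star_mulVec, star_dotProduct, dotProduct_comm]
    rw [smul_mulVec, add_mulVec, dotProduct_smul, dotProduct_add, hstar, dotProduct_comm (star ξ),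
      star_def, add_conj, smul_eq_mul, ofReal_mul, ofReal_ofNat, inv_mul_cancel_left₀ two_ne_zero]
    exact zero_le_real.mpr (hC ξ)

theorem sum_sum_norm_antisymmPartIm_mul_sq_le {C : Matrix n n ℂ}
    (hC : ∀ ξ, 0 ≤ ((C *ᵥ ξ) ⬝ᵥ star ξ).re) {N : ℝ}
    (hN : ∀ η : n → ℂ, ((C.symmPartRe *ᵥ η) ⬝ᵥ star η).re ≤ N * ∑ i, ‖η i‖ ^ 2)
    {U : Matrix n n ℂ} (hU : Uᵀ = U) :
    ∑ i, ∑ j, ‖(C.antisymmPartIm * U) i j‖ ^ 2 ≤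
      2 * N * (U * C.symmPartRe * U.map (starRingEnd ℂ)).trace.re := by
  have hplus : (C.symmPartRe + I • C.antisymmPartIm).PosSemidef := by
    rw [symmPartRe_add_I_smul_antisymmPartIm]
    exact .half_smul_add_conjTranspose hC
  have hminus : (C.symmPartRe - I • C.antisymmPartIm).PosSemidef := by
    rw [← transpose_symmPartRe_add_I_smul_antisymmPartIm]
    exact hplus.transpose
  have hconj : U.map (starRingEnd ℂ) = Uᴴ := by
    rw [conjTranspose, hU]
    rfl
  have := sum_sum_norm_mul_sq_le hplus hminus hN Uᴴ
  rw [conjTranspose_conjTranspose, ← hconj, ← map_conj_antisymmPartIm, ← Matrix.map_mul] at this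
  simpa only [map_apply, norm_conj] using this

end Matrix

theorem stmt_18_general (d : ℕ) (θ : ℝ)
    (Ct : Matrix (Fin d) (Fin d) ℂ)
    (hsec : ∀ ξ : Fin d → ℂ,
      0 ≤ (Ct.mulVec ξ ⬝ᵥ star ξ).re ∧
      |(Ct.mulVec ξ ⬝ᵥ star ξ).im| ≤ Real.tan θ * (Ct.mulVec ξ ⬝ᵥ star ξ).re)
    (N : ℝ)
    (hN : ∀ η : Fin d → ℂ,
      (((Matrix.of fun k l => (((Ct k l).re + (Ct l k).re) / 2 : ℂ)).mulVec η) ⬝ᵥ star η).re ≤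
        N * ∑ i, ‖η i‖ ^ 2)
    (φ : (Fin d → ℝ) → ℝ) (hφ : ContDiff ℝ 2 φ) (hφpos : ∀ x, 0 ≤ φ x)
    (M : ℝ)
    (hM2 : ∀ x, ∀ j k : Fin d,
      |fderiv ℝ (fun y => fderiv ℝ φ y (Pi.single j 1)) x (Pi.single k 1)| ≤ M)
    (l : Fin d) (x : Fin d → ℝ)
    (U : Matrix (Fin d) (Fin d) ℂ) (hU : Uᵀ = U) :
    ∑ i, ∑ j, ‖(((fderiv ℝ φ x (Pi.single l 1) : ℝ) : ℂ) •
        ((Matrix.of fun k m => ((((Ct k m).im - (Ct m k).im) / 2 : ℝ) : ℂ)) * U)) i j‖ ^ 2 ≤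
      8 * M * N *
        ((U * (((φ x : ℝ) : ℂ) • (Matrix.of fun k m => (((Ct k m).re + (Ct m k).re) / 2 : ℂ))) *
          (U.map (starRingEnd ℂ))).trace).re := by
  have hderiv : fderiv ℝ φ x (Pi.single l 1) ^ 2 ≤ 2 * M * φ x :=
    sq_fderiv_le_two_mul_of_nonneg hφ hφpos _ (fun y => (abs_le.mp (hM2 y l l)).2) x
  have hHS := sum_sum_norm_antisymmPartIm_mul_sq_le (fun ξ => (hsec ξ).1) hN hU
  set S := ∑ i, ∑ j, ‖(Ct.antisymmPartIm * U) i j‖ ^ 2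
  set T := (U * Ct.symmPartRe * U.map (starRingEnd ℂ)).trace.re
  have hS : 0 ≤ S := by positivity
  have hMφ : 0 ≤ 2 * M * φ x := (sq_nonneg _).trans hderiv
  calc ∑ i, ∑ j, ‖(((fderiv ℝ φ x (Pi.single l 1) : ℝ) : ℂ) • (Ct.antisymmPartIm * U)) i j‖ ^ 2
      = fderiv ℝ φ x (Pi.single l 1) ^ 2 * S := by
        simp only [S, Matrix.smul_apply, norm_smul, mul_pow, Finset.mul_sum, Complex.norm_real,
          Real.norm_eq_abs, sq_abs]
    _ ≤ (2 * M * φ x) * (2 * N * T) := mul_le_mul hderiv hHS hS hMφ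
    _ ≤ 8 * M * N * (φ x * T) := by nlinarith [mul_nonneg hMφ (hS.trans hHS)]
    _ = 8 * M * N * (U * ((φ x : ℂ) • Ct.symmPartRe) * U.map (starRingEnd ℂ)).trace.re := by
        rw [Matrix.mul_smul, Matrix.smul_mul, trace_smul, smul_eq_mul, Complex.re_ofReal_mul]

/-- Let `φ ≥ 0` be a real `W^{2,∞}` function (C² with `M` bounding `φ` and all its first
and second partials), and `C̃` a constant complex matrix taking values in `Σ_θ`, with
symmetric real part `R̃_s` (operator-norm bound `N`) and antisymmetric imaginary part
`B̃_a`. For `C = φ C̃` one has `B_a = φ B̃_a`, `R_s = φ R̃_s`, and for every `l`, every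
point `x` and every complex symmetric `U`:
`‖(∂_l B_a)(x) U‖²_HS ≤ 8 M N tr(U R_s(x) Ū)`. -/
theorem stmt_18 (d : ℕ) (θ : ℝ) (hθ : θ ∈ Set.Ico 0 (Real.pi / 2))
    (Ct : Matrix (Fin d) (Fin d) ℂ)
    (hsec : ∀ ξ : Fin d → ℂ,
      0 ≤ (Ct.mulVec ξ ⬝ᵥ star ξ).re ∧
      |(Ct.mulVec ξ ⬝ᵥ star ξ).im| ≤ Real.tan θ * (Ct.mulVec ξ ⬝ᵥ star ξ).re)
    (N : ℝ)
    (hN : ∀ η : Fin d → ℂ,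
      (((Matrix.of fun k l => (((Ct k l).re + (Ct l k).re) / 2 : ℂ)).mulVec η) ⬝ᵥ star η).re ≤
        N * ∑ i, ‖η i‖ ^ 2)
    (φ : (Fin d → ℝ) → ℝ) (hφ : ContDiff ℝ 2 φ) (hφpos : ∀ x, 0 ≤ φ x)
    (M : ℝ)
    (hM0 : ∀ x, φ x ≤ M)
    (hM1 : ∀ x, ∀ j : Fin d, |fderiv ℝ φ x (Pi.single j 1)| ≤ M)
    (hM2 : ∀ x, ∀ j k : Fin d,
      |fderiv ℝ (fun y => fderiv ℝ φ y (Pi.single j 1)) x (Pi.single k 1)| ≤ M)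
    (l : Fin d) (x : Fin d → ℝ)
    (U : Matrix (Fin d) (Fin d) ℂ) (hU : Uᵀ = U) :
    ∑ i, ∑ j, ‖(((fderiv ℝ φ x (Pi.single l 1) : ℝ) : ℂ) •
        ((Matrix.of fun k m => ((((Ct k m).im - (Ct m k).im) / 2 : ℝ) : ℂ)) * U)) i j‖ ^ 2 ≤
      8 * M * N *
        ((U * (((φ x : ℝ) : ℂ) • (Matrix.of fun k m => (((Ct k m).re + (Ct m k).re) / 2 : ℂ))) *
          (U.map (starRingEnd ℂ))).trace).re :=
  stmt_18_general d θ Ct hsec N hN φ hφ hφpos M hM2 l x U hU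
end

section
/- Let θ ∈ [0, π/2), δ ∈ (0,1), and let C = (R_s + R_a) + i(B_s + B_a) be a d×d complex matrix taking values in Σ_θ, where R_s, B_s are the symmetric and R_a, B_a the antisymmetric parts of the real and imaginary parts of C. Define C_δ = (R_s + iδ B_a) + i(B_s - i R_a). Then C_δ takes values in Σ_ψ where ψ ∈ [0, π/2) satisfies tan ψ = (tan θ)/δ. -/
open Matrix

lemma qf_expand {d : ℕ} (M : Matrix (Fin d) (Fin d) ℂ) (ξ : Fin d → ℂ) :
    M.mulVec ξ ⬝ᵥ star ξ = ∑ k, ∑ l, M k l * ξ l * (starRingEnd ℂ) (ξ k) := by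
  simp only [dotProduct, mulVec, Pi.star_apply, RCLike.star_def]
  exact Finset.sum_congr rfl fun k _ => by rw [Finset.sum_mul]

lemma two_mul_dsum (d : ℕ) (f : Fin d → Fin d → ℝ) :
    2 * ∑ k, ∑ l, f k l = ∑ k, ∑ l, (f k l + f l k) := by
  have : ∑ k, ∑ l, (f k l + f l k) = (∑ k, ∑ l, f k l) + ∑ k, ∑ l, f l k := by
    simp [Finset.sum_add_distrib]
  rw [this, Finset.sum_comm]; ring

lemma key_identities {d : ℕ} (δ : ℝ) (C : Matrix (Fin d) (Fin d) ℂ) (ξ : Fin d → ℂ) :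
    (((Matrix.of fun k l => (((C k l).re : ℝ) : ℂ) +
        Complex.I * ((((C k l).im + (C l k).im) / 2 +
          δ * (((C k l).im - (C l k).im) / 2) : ℝ) : ℂ)).mulVec ξ) ⬝ᵥ star ξ).re
      = (1 + δ) / 2 * (C.mulVec ξ ⬝ᵥ star ξ).re
        + (1 - δ) / 2 * (C.mulVec (star ξ) ⬝ᵥ star (star ξ)).re ∧
    (((Matrix.of fun k l => (((C k l).re : ℝ) : ℂ) +
        Complex.I * ((((C k l).im + (C l k).im) / 2 +
          δ * (((C k l).im - (C l k).im) / 2) : ℝ) : ℂ)).mulVec ξ) ⬝ᵥ star ξ).im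
      = (C.mulVec ξ ⬝ᵥ star ξ).im := by
  set D : Matrix (Fin d) (Fin d) ℂ := Matrix.of fun k l => (((C k l).re : ℝ) : ℂ) +
        Complex.I * ((((C k l).im + (C l k).im) / 2 +
          δ * (((C k l).im - (C l k).im) / 2) : ℝ) : ℂ) with hDdef
  rw [qf_expand D ξ, qf_expand C ξ, qf_expand C (star ξ)]
  set fD : Fin d → Fin d → ℝ := fun k l => (D k l * ξ l * (starRingEnd ℂ) (ξ k)).re with hfD
  set fC : Fin d → Fin d → ℝ := fun k l => (C k l * ξ l * (starRingEnd ℂ) (ξ k)).re with hfC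
  set fC' : Fin d → Fin d → ℝ :=
    fun k l => (C k l * (star ξ) l * (starRingEnd ℂ) ((star ξ) k)).re with hfC'
  set gD : Fin d → Fin d → ℝ := fun k l => (D k l * ξ l * (starRingEnd ℂ) (ξ k)).im with hgD
  set gC : Fin d → Fin d → ℝ := fun k l => (C k l * ξ l * (starRingEnd ℂ) (ξ k)).im with hgC
  have hre : ∀ (M : Matrix (Fin d) (Fin d) ℂ) (η : Fin d → ℂ),
      (∑ k, ∑ l, M k l * η l * (starRingEnd ℂ) (η k)).re
        = ∑ k, ∑ l, (M k l * η l * (starRingEnd ℂ) (η k)).re := by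
    intro M η; rw [Complex.re_sum]
    exact Finset.sum_congr rfl fun k _ => by rw [Complex.re_sum]
  have him : ∀ (M : Matrix (Fin d) (Fin d) ℂ) (η : Fin d → ℂ),
      (∑ k, ∑ l, M k l * η l * (starRingEnd ℂ) (η k)).im
        = ∑ k, ∑ l, (M k l * η l * (starRingEnd ℂ) (η k)).im := by
    intro M η; rw [Complex.im_sum]
    exact Finset.sum_congr rfl fun k _ => by rw [Complex.im_sum]
  constructor
  · rw [hre D ξ, hre C ξ, hre C (star ξ)]
    have h2 : 2 * (∑ k, ∑ l, fD k l)
        = 2 * ((1 + δ) / 2 * ∑ k, ∑ l, fC k l + (1 - δ) / 2 * ∑ k, ∑ l, fC' k l) := by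
      rw [two_mul_dsum d fD]
      have e1 : 2 * ((1 + δ) / 2 * ∑ k, ∑ l, fC k l + (1 - δ) / 2 * ∑ k, ∑ l, fC' k l)
          = (1 + δ) / 2 * (2 * ∑ k, ∑ l, fC k l) + (1 - δ) / 2 * (2 * ∑ k, ∑ l, fC' k l) := by
        ring
      rw [e1, two_mul_dsum d fC, two_mul_dsum d fC', Finset.mul_sum, Finset.mul_sum,
        ← Finset.sum_add_distrib]
      refine Finset.sum_congr rfl fun k _ => ?_
      rw [Finset.mul_sum, Finset.mul_sum, ← Finset.sum_add_distrib]
      refine Finset.sum_congr rfl fun l _ => ?_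
      simp only [hfD, hfC, hfC', hDdef, Matrix.of_apply, Pi.star_apply, Complex.mul_re,
        Complex.mul_im, Complex.add_re, Complex.add_im, Complex.ofReal_re, Complex.ofReal_im,
        Complex.I_re, Complex.I_im, Complex.conj_re, Complex.conj_im, Pi.star_apply, Complex.star_def]
      ring
    linarith
  · rw [him D ξ, him C ξ]
    have h2 : 2 * (∑ k, ∑ l, gD k l) = 2 * ∑ k, ∑ l, gC k l := by
      rw [two_mul_dsum d gD, two_mul_dsum d gC]
      refine Finset.sum_congr rfl fun k _ => Finset.sum_congr rfl fun l _ => ?_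
      simp only [hgD, hgC, hDdef, Matrix.of_apply, Complex.mul_re,
        Complex.mul_im, Complex.add_re, Complex.add_im, Complex.ofReal_re, Complex.ofReal_im,
        Complex.I_re, Complex.I_im, Complex.conj_re, Complex.conj_im, Pi.star_apply, Complex.star_def]
      ring
    linarith

/-- If `C = (R_s + R_a) + i(B_s + B_a)` takes values in `Σ_θ` and `δ ∈ (0,1)`, then
`C_δ = (R_s + iδB_a) + i(B_s - iR_a)` (entrywise: `(C_δ)_{kl} = Re C_{kl} + i(B_s + δ B_a)_{kl}`)
takes values in `Σ_ψ` where `ψ ∈ [0, π/2)` satisfies `tan ψ = (tan θ)/δ`. -/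
theorem stmt_19 (d : ℕ) (θ : ℝ) (hθ : θ ∈ Set.Ico 0 (Real.pi / 2))
    (δ : ℝ) (hδ : δ ∈ Set.Ioo (0 : ℝ) 1)
    (C : Matrix (Fin d) (Fin d) ℂ)
    (hsec : ∀ ξ : Fin d → ℂ,
      0 ≤ (C.mulVec ξ ⬝ᵥ star ξ).re ∧
      |(C.mulVec ξ ⬝ᵥ star ξ).im| ≤ Real.tan θ * (C.mulVec ξ ⬝ᵥ star ξ).re) :
    ∃ ψ : ℝ, ψ ∈ Set.Ico 0 (Real.pi / 2) ∧ Real.tan ψ = Real.tan θ / δ ∧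
      ∀ ξ : Fin d → ℂ,
        0 ≤ (((Matrix.of fun k l => (((C k l).re : ℝ) : ℂ) +
            Complex.I * ((((C k l).im + (C l k).im) / 2 +
              δ * (((C k l).im - (C l k).im) / 2) : ℝ) : ℂ)).mulVec ξ) ⬝ᵥ star ξ).re ∧
        |(((Matrix.of fun k l => (((C k l).re : ℝ) : ℂ) +
            Complex.I * ((((C k l).im + (C l k).im) / 2 +
              δ * (((C k l).im - (C l k).im) / 2) : ℝ) : ℂ)).mulVec ξ) ⬝ᵥ star ξ).im| ≤
          Real.tan ψ *
          (((Matrix.of fun k l => (((C k l).re : ℝ) : ℂ) +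
            Complex.I * ((((C k l).im + (C l k).im) / 2 +
              δ * (((C k l).im - (C l k).im) / 2) : ℝ) : ℂ)).mulVec ξ) ⬝ᵥ star ξ).re := by
  obtain ⟨hθ0, hθπ⟩ := hθ
  obtain ⟨hδ0, hδ1⟩ := hδ
  have htan0 : 0 ≤ Real.tan θ := Real.tan_nonneg_of_nonneg_of_le_pi_div_two hθ0 (le_of_lt hθπ)
  have htd : 0 ≤ Real.tan θ / δ := div_nonneg htan0 hδ0.le
  refine ⟨Real.arctan (Real.tan θ / δ),
    ⟨Real.arctan_zero ▸ Real.arctan_strictMono.monotone htd, Real.arctan_lt_pi_div_two _⟩, Real.tan_arctan _, ?_⟩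
  intro ξ
  obtain ⟨hre, him⟩ := key_identities δ C ξ
  rw [Real.tan_arctan, hre, him]
  obtain ⟨h0, h1⟩ := hsec ξ
  obtain ⟨h0', _⟩ := hsec (star ξ)
  set a := (C.mulVec ξ ⬝ᵥ star ξ).re
  set b := (C.mulVec (star ξ) ⬝ᵥ star (star ξ)).re
  have hgeδ : δ * a ≤ (1 + δ) / 2 * a + (1 - δ) / 2 * b := by nlinarith
  constructor
  · nlinarith
  · calc |(C.mulVec ξ ⬝ᵥ star ξ).im| ≤ Real.tan θ * a := h1
      _ = Real.tan θ / δ * (δ * a) := by field_simp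
      _ ≤ Real.tan θ / δ * ((1 + δ) / 2 * a + (1 - δ) / 2 * b) := by
          exact mul_le_mul_of_nonneg_left hgeδ htd
end
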